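/- arXiv:math/0501017 — 5 statements merged into one kernel-verified Lean document; each statement's English description precedes it below -/
import Mathlib

section
/- Let U ⊆ ℝ² be an open set and let h₁, h₂ : ℝ² → ℝ be twice continuously differentiable on U. Define H : ℝ² → ℝ by H(x) = (exp(h₁(x)) + exp(h₂(x)))/2. Then for every x ∈ U, the Laplacian of log H satisfies Δ(log H)(x) ≥ (exp(h₁(x))·Δh₁(x) + exp(h₂(x))·Δh₂(x)) / (2·H(x)). -/
/-! With `a = exp (h₁ x)`, `b = exp (h₂ x)`, the chain rule gives in every direction `v`
`D²(log H)(v, v) = (a (D²h₁ + (Dh₁)²) + b (D²h₂ + (Dh₂)²)) / (a + b) - ((a Dh₁ + b Dh₂) / (a + b))²`,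
all derivatives taken at `x` and applied to `v`. The subtracted term is the square of a weighted
mean of `Dh₁ v` and `Dh₂ v`, hence at most the weighted mean of their squares, which leaves
`D²(log H)(v, v) ≥ (a D²h₁ + b D²h₂) / (a + b)`; summing over an orthonormal basis gives the
Laplacian inequality. -/

open Real

/-- The Laplacian of a function on the Euclidean plane: the sum of the
second partial derivatives, i.e. the trace of the second derivative. -/
noncomputable def laplacian (f : EuclideanSpace ℝ (Fin 2) → ℝ)
    (x : EuclideanSpace ℝ (Fin 2)) : ℝ :=
  ∑ i : Fin 2, iteratedFDeriv ℝ 2 f x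
    ![EuclideanSpace.single i 1, EuclideanSpace.single i 1]

open Topology
open scoped Laplacian

theorem sq_weighted_mean_le {a b p q : ℝ} (ha : 0 ≤ a) (hb : 0 ≤ b) (hab : 0 < a + b) :
    ((a * p + b * q) / (a + b)) ^ 2 ≤ (a * p ^ 2 + b * q ^ 2) / (a + b) := by
  rw [div_pow, div_le_div_iff₀ (by positivity) hab]
  nlinarith [mul_nonneg (mul_nonneg ha hb) (sq_nonneg (p - q))]

section Hessian

variable {E : Type*} [NormedAddCommGroup E] [NormedSpace ℝ E]

theorem ContDiffAt.iteratedFDeriv_two_comp_apply {g : ℝ → ℝ} {f : E → ℝ} {x : E}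
    (hg : ContDiffAt ℝ 2 g (f x)) (hf : ContDiffAt ℝ 2 f x) (v w : E) :
    iteratedFDeriv ℝ 2 (g ∘ f) x ![v, w] =
      deriv (deriv g) (f x) * (fderiv ℝ f x v * fderiv ℝ f x w) +
        deriv g (f x) * iteratedFDeriv ℝ 2 f x ![v, w] := by
  have hfderiv : fderiv ℝ (g ∘ f) =ᶠ[𝓝 x] fun y ↦ deriv g (f y) • fderiv ℝ f y := by
    filter_upwards [hf.eventually (by simp),
      hf.continuousAt.eventually (hg.eventually (by simp))] with y hfy hgy
    exact ((hgy.differentiableAt (by simp)).hasDerivAt.comp_hasFDerivAt y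
      (hfy.differentiableAt (by simp)).hasFDerivAt).fderiv
  have hg' : HasFDerivAt (fun y ↦ deriv g (f y)) (deriv (deriv g) (f x) • fderiv ℝ f x) x :=
    ((hg.derivWithin (m := 1) (by norm_num)).differentiableAt (by simp)).hasDerivAt.comp_hasFDerivAt
      x (hf.differentiableAt (by simp)).hasFDerivAt
  have hf' : HasFDerivAt (fderiv ℝ f) (fderiv ℝ (fderiv ℝ f) x) x :=
    ((hf.fderiv_right (m := 1) le_rfl).differentiableAt (by simp)).hasFDerivAt
  rw [iteratedFDeriv_two_apply, iteratedFDeriv_two_apply, hfderiv.fderiv_eq,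
    (hg'.fun_smul hf').fderiv]
  simp only [Matrix.cons_val_zero, Matrix.cons_val_one, Matrix.cons_val_fin_one, add_apply,
    smul_apply, ContinuousLinearMap.smulRight_apply, smul_eq_mul]
  ring

theorem ContDiffAt.iteratedFDeriv_two_exp_comp_apply {h : E → ℝ} {x : E}
    (hh : ContDiffAt ℝ 2 h x) (v w : E) :
    iteratedFDeriv ℝ 2 (fun y ↦ Real.exp (h y)) x ![v, w] =
      Real.exp (h x) * (fderiv ℝ h x v * fderiv ℝ h x w + iteratedFDeriv ℝ 2 h x ![v, w]) := by
  rw [show (fun y ↦ Real.exp (h y)) = Real.exp ∘ h from rfl,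
    contDiff_exp.contDiffAt.iteratedFDeriv_two_comp_apply hh]
  simp only [Real.deriv_exp]
  ring

theorem ContDiffAt.iteratedFDeriv_two_log_comp_apply {f : E → ℝ} {x : E}
    (hf : ContDiffAt ℝ 2 f x) (hx : f x ≠ 0) (v w : E) :
    iteratedFDeriv ℝ 2 (fun y ↦ Real.log (f y)) x ![v, w] =
      iteratedFDeriv ℝ 2 f x ![v, w] / f x - fderiv ℝ f x v * fderiv ℝ f x w / f x ^ 2 := by
  rw [show (fun y ↦ Real.log (f y)) = Real.log ∘ f from rfl,
    (contDiffAt_log.2 hx).iteratedFDeriv_two_comp_apply hf]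
  simp only [deriv_log', deriv_inv', neg_mul]
  ring

theorem ContDiffAt.div_le_iteratedFDeriv_two_log_avg_exp {h₁ h₂ : E → ℝ} {x : E}
    (hh₁ : ContDiffAt ℝ 2 h₁ x) (hh₂ : ContDiffAt ℝ 2 h₂ x) (v : E) :
    (Real.exp (h₁ x) * iteratedFDeriv ℝ 2 h₁ x ![v, v] +
        Real.exp (h₂ x) * iteratedFDeriv ℝ 2 h₂ x ![v, v]) / (Real.exp (h₁ x) + Real.exp (h₂ x)) ≤
      iteratedFDeriv ℝ 2 (fun y ↦ Real.log ((Real.exp (h₁ y) + Real.exp (h₂ y)) / 2)) x ![v, v] := by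
  set S : E → ℝ := fun y ↦ Real.exp (h₁ y) + Real.exp (h₂ y) with hS
  have hS_contDiff : ContDiffAt ℝ 2 S x := hh₁.exp.add hh₂.exp
  have hS_fderiv : fderiv ℝ S x v =
      Real.exp (h₁ x) * fderiv ℝ h₁ x v + Real.exp (h₂ x) * fderiv ℝ h₂ x v := by
    rw [((hh₁.differentiableAt (by simp)).hasFDerivAt.exp.fun_add
      (hh₂.differentiableAt (by simp)).hasFDerivAt.exp).fderiv]
    simp
  have hS_hessian : iteratedFDeriv ℝ 2 S x ![v, v] =
      Real.exp (h₁ x) * (fderiv ℝ h₁ x v ^ 2 + iteratedFDeriv ℝ 2 h₁ x ![v, v]) +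
        Real.exp (h₂ x) * (fderiv ℝ h₂ x v ^ 2 + iteratedFDeriv ℝ 2 h₂ x ![v, v]) := by
    rw [fun_iteratedFDeriv_add_apply hh₁.exp hh₂.exp, add_apply,
      hh₁.iteratedFDeriv_two_exp_comp_apply, hh₂.iteratedFDeriv_two_exp_comp_apply, sq, sq]
  have hH : (fun y ↦ Real.log ((Real.exp (h₁ y) + Real.exp (h₂ y)) / 2)) =
      fun y ↦ Real.log ((2 : ℝ)⁻¹ • S y) := by
    ext y; simp [hS, div_eq_inv_mul]
  have hH_pos : 0 < (2 : ℝ)⁻¹ • S x := by simp only [hS, smul_eq_mul]; positivity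
  rw [hH, (hS_contDiff.const_smul _).iteratedFDeriv_two_log_comp_apply hH_pos.ne',
    iteratedFDeriv_const_smul_apply' hS_contDiff,
    fderiv_fun_const_smul (hS_contDiff.differentiableAt (by simp))]
  simp only [smul_apply, smul_eq_mul, hS_fderiv, hS_hessian,
    show S x = Real.exp (h₁ x) + Real.exp (h₂ x) from rfl]
  set a := Real.exp (h₁ x)
  set b := Real.exp (h₂ x)
  have hab : 0 < a + b := by positivity
  calc (a * iteratedFDeriv ℝ 2 h₁ x ![v, v] + b * iteratedFDeriv ℝ 2 h₂ x ![v, v]) / (a + b)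
      = (a * (fderiv ℝ h₁ x v ^ 2 + iteratedFDeriv ℝ 2 h₁ x ![v, v]) +
          b * (fderiv ℝ h₂ x v ^ 2 + iteratedFDeriv ℝ 2 h₂ x ![v, v])) / (a + b) -
          (a * fderiv ℝ h₁ x v ^ 2 + b * fderiv ℝ h₂ x v ^ 2) / (a + b) := by ring
    _ ≤ (a * (fderiv ℝ h₁ x v ^ 2 + iteratedFDeriv ℝ 2 h₁ x ![v, v]) +
          b * (fderiv ℝ h₂ x v ^ 2 + iteratedFDeriv ℝ 2 h₂ x ![v, v])) / (a + b) -
          ((a * fderiv ℝ h₁ x v + b * fderiv ℝ h₂ x v) / (a + b)) ^ 2 := by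
      gcongr
      exact sq_weighted_mean_le (by positivity) (by positivity) hab
    _ = _ := by field_simp

end Hessian

theorem ContDiffAt.div_le_laplacian_log_avg_exp {E : Type*} [NormedAddCommGroup E]
    [InnerProductSpace ℝ E] [FiniteDimensional ℝ E] {h₁ h₂ : E → ℝ} {x : E}
    (hh₁ : ContDiffAt ℝ 2 h₁ x) (hh₂ : ContDiffAt ℝ 2 h₂ x) :
    (Real.exp (h₁ x) * Δ h₁ x + Real.exp (h₂ x) * Δ h₂ x) / (Real.exp (h₁ x) + Real.exp (h₂ x)) ≤
      Δ (fun y ↦ Real.log ((Real.exp (h₁ y) + Real.exp (h₂ y)) / 2)) x := by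
  simp only [InnerProductSpace.laplacian_eq_iteratedFDeriv_stdOrthonormalBasis, Finset.mul_sum,
    ← Finset.sum_add_distrib, Finset.sum_div]
  exact Finset.sum_le_sum fun i _ ↦ hh₁.div_le_iteratedFDeriv_two_log_avg_exp hh₂ _

theorem laplacian_eq_laplacian (f : EuclideanSpace ℝ (Fin 2) → ℝ) : laplacian f = Δ f := by
  ext x
  simp [laplacian, InnerProductSpace.laplacian_eq_iteratedFDeriv_orthonormalBasis f
    (EuclideanSpace.basisFun (Fin 2) ℝ)]

theorem laplacian_log_avg_exp_ge
    (U : Set (EuclideanSpace ℝ (Fin 2))) (hU : IsOpen U)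
    (h₁ h₂ : EuclideanSpace ℝ (Fin 2) → ℝ)
    (hh₁ : ContDiffOn ℝ 2 h₁ U) (hh₂ : ContDiffOn ℝ 2 h₂ U)
    (H : EuclideanSpace ℝ (Fin 2) → ℝ)
    (hH : ∀ x, H x = (Real.exp (h₁ x) + Real.exp (h₂ x)) / 2) :
    ∀ x ∈ U, laplacian (fun y => Real.log (H y)) x ≥
      (Real.exp (h₁ x) * laplacian h₁ x + Real.exp (h₂ x) * laplacian h₂ x)
        / (2 * H x) := by
  intro x hx
  have hUx : U ∈ 𝓝 x := hU.mem_nhds hx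
  simp only [hH, laplacian_eq_laplacian, show 2 * ((Real.exp (h₁ x) + Real.exp (h₂ x)) / 2) =
    Real.exp (h₁ x) + Real.exp (h₂ x) by ring]
  exact (hh₁.contDiffAt hUx).div_le_laplacian_log_avg_exp (hh₂.contDiffAt hUx)
end

section
/- Let U ⊆ ℝ² be an open set and let h₁, h₂ : ℝ² → ℝ be twice continuously differentiable on U, and suppose Δh₁(x) ≥ 0 and Δh₂(x) ≥ 0 for all x ∈ U. Then the function log((exp ∘ h₁ + exp ∘ h₂)/2) has nonnegative Laplacian at every point of U; that is, the logarithm of the average of exponentials of subharmonic functions is subharmonic. -/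
open Real

/-!
Along a line, the second derivative of `log ((exp a + exp b) / 2)` is the average of `a''` and
`b''` with weights `exp a` and `exp b`, plus the variance term
`exp a * exp b * (a' - b') ^ 2 / (exp a + exp b) ^ 2 ≥ 0`. Summing over the coordinate directions,
the Laplacian of `log ((exp h₁ + exp h₂) / 2)` dominates the corresponding weighted average of
`Δh₁` and `Δh₂`, which is nonnegative.
-/

open Filter Topology

theorem deriv_deriv_log_avg_exp {a b : ℝ → ℝ} {t : ℝ} (ha : ContDiffAt ℝ 2 a t)
    (hb : ContDiffAt ℝ 2 b t) :
    deriv (deriv fun s => log ((exp (a s) + exp (b s)) / 2)) t =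
      (exp (a t) * deriv (deriv a) t + exp (b t) * deriv (deriv b) t) / (exp (a t) + exp (b t))
        + exp (a t) * exp (b t) * (deriv a t - deriv b t) ^ 2 / (exp (a t) + exp (b t)) ^ 2 := by
  have h_deriv : deriv (fun s => log ((exp (a s) + exp (b s)) / 2)) =ᶠ[𝓝 t]
      fun s => (exp (a s) * deriv a s + exp (b s) * deriv b s) / (exp (a s) + exp (b s)) := by
    filter_upwards [ha.eventually (by simp), hb.eventually (by simp)] with s ha_s hb_s
    have hsum := ((ha_s.differentiableAt two_ne_zero).hasDerivAt.exp.fun_add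
      (hb_s.differentiableAt two_ne_zero).hasDerivAt.exp).div_const 2
    rw [(hsum.log (by positivity)).deriv]
    field_simp
  have hda := (ha.differentiableAt two_ne_zero).hasDerivAt
  have hdb := (hb.differentiableAt two_ne_zero).hasDerivAt
  have hdda := ((ha.derivWithin (m := 1) le_rfl).differentiableAt one_ne_zero).hasDerivAt
  have hddb := ((hb.derivWithin (m := 1) le_rfl).differentiableAt one_ne_zero).hasDerivAt
  have hden := hda.exp.fun_add hdb.exp
  rw [h_deriv.deriv_eq, (((hda.exp.fun_mul hdda).fun_add (hdb.exp.fun_mul hddb)).fun_div hden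
    (by positivity)).deriv]
  field_simp
  ring

section

variable {E F : Type*} [NormedAddCommGroup E] [NormedSpace ℝ E]
  [NormedAddCommGroup F] [NormedSpace ℝ F]

theorem ContDiffAt.iteratedFDeriv_two_apply_self {f : E → F} {x : E} (hf : ContDiffAt ℝ 2 f x)
    (v : E) :
    iteratedFDeriv ℝ 2 f x ![v, v] = deriv (deriv fun t : ℝ => f (x + t • v)) 0 := by
  have h_line : Tendsto (fun t : ℝ => x + t • v) (𝓝 0) (𝓝 x) := by
    have h : Continuous fun t : ℝ => x + t • v := by fun_prop
    simpa using h.tendsto 0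
  have h_deriv : deriv (fun t : ℝ => f (x + t • v)) =ᶠ[𝓝 0]
      fun t => iteratedFDeriv ℝ 1 f (x + t • v) (fun _ => v) := by
    filter_upwards [h_line.eventually (hf.eventually (by simp))] with t ht
    simpa using (ht.of_le one_le_two).deriv_fderiv_add_smul (n := 0)
  have hf₀ : ContDiffAt ℝ (1 + 1) f (x + (0 : ℝ) • v) := by
    rwa [zero_smul, add_zero]
  rw [h_deriv.deriv_eq, hf₀.deriv_fderiv_add_smul]
  simp only [zero_smul, add_zero]
  congr 1
  ext i
  fin_cases i <;> rfl

theorem ContDiffAt.comp_add_smul {n : WithTop ℕ∞} {f : E → F} {x : E} (hf : ContDiffAt ℝ n f x)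
    (v : E) : ContDiffAt ℝ n (fun t : ℝ => f (x + t • v)) 0 :=
  ContDiffAt.comp (g := f) (0 : ℝ) (by rwa [zero_smul, add_zero]) (by fun_prop)

theorem le_iteratedFDeriv_two_log_avg_exp {f g : E → ℝ} {x : E} (hf : ContDiffAt ℝ 2 f x)
    (hg : ContDiffAt ℝ 2 g x) (v : E) :
    (exp (f x) * iteratedFDeriv ℝ 2 f x ![v, v] + exp (g x) * iteratedFDeriv ℝ 2 g x ![v, v])
        / (exp (f x) + exp (g x)) ≤
      iteratedFDeriv ℝ 2 (fun y => log ((exp (f y) + exp (g y)) / 2)) x ![v, v] := by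
  have hF : ContDiffAt ℝ 2 (fun y => log ((exp (f y) + exp (g y)) / 2)) x :=
    ContDiffAt.log (by fun_prop) (by positivity)
  rw [hf.iteratedFDeriv_two_apply_self, hg.iteratedFDeriv_two_apply_self,
    hF.iteratedFDeriv_two_apply_self,
    deriv_deriv_log_avg_exp (hf.comp_add_smul v) (hg.comp_add_smul v)]
  simp only [zero_smul, add_zero]
  exact le_add_of_nonneg_right (by positivity)

end

theorem le_laplacian_log_avg_exp {f g : EuclideanSpace ℝ (Fin 2) → ℝ}
    {x : EuclideanSpace ℝ (Fin 2)} (hf : ContDiffAt ℝ 2 f x) (hg : ContDiffAt ℝ 2 g x) :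
    (exp (f x) * laplacian f x + exp (g x) * laplacian g x) / (exp (f x) + exp (g x)) ≤
      laplacian (fun y => log ((exp (f y) + exp (g y)) / 2)) x := by
  simp only [laplacian, Finset.mul_sum, ← Finset.sum_add_distrib, Finset.sum_div]
  exact Finset.sum_le_sum fun i _ => le_iteratedFDeriv_two_log_avg_exp hf hg _

theorem log_avg_exp_subharmonic
    (U : Set (EuclideanSpace ℝ (Fin 2))) (hU : IsOpen U)
    (h₁ h₂ : EuclideanSpace ℝ (Fin 2) → ℝ)
    (hh₁ : ContDiffOn ℝ 2 h₁ U) (hh₂ : ContDiffOn ℝ 2 h₂ U)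
    (hsub₁ : ∀ x ∈ U, 0 ≤ laplacian h₁ x)
    (hsub₂ : ∀ x ∈ U, 0 ≤ laplacian h₂ x) :
    ∀ x ∈ U,
      0 ≤ laplacian (fun y => Real.log ((Real.exp (h₁ y) + Real.exp (h₂ y)) / 2)) x := by
  intro x hx
  refine le_trans ?_ (le_laplacian_log_avg_exp (hh₁.contDiffAt (hU.mem_nhds hx))
    (hh₂.contDiffAt (hU.mem_nhds hx)))
  have h_avg := add_nonneg (mul_nonneg (exp_pos (h₁ x)).le (hsub₁ x hx))
    (mul_nonneg (exp_pos (h₂ x)).le (hsub₂ x hx))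
  exact div_nonneg h_avg (by positivity)
end

section
/- The function x ↦ x · tan(π/x) is strictly decreasing on the open interval (2, ∞); that is, for all real numbers 2 < x < y one has y · tan(π/y) < x · tan(π/x). -/
open Real

/-! With `t = π / x` one has `x * tan (π / x) = π * (tan t / t)`, and `x ↦ π / x` maps `(2, ∞)`
decreasingly onto `(0, π / 2)`. There `tan t / t` is increasing: its derivative
`(t / cos² t - tan t) / t²` has the sign of `t - sin t cos t = t - sin (2t) / 2 > 0`. -/

namespace Real

theorem sin_mul_cos_lt_self {t : ℝ} (ht : 0 < t) : sin t * cos t < t := by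
  have := sin_lt (mul_pos two_pos ht)
  rw [sin_two_mul] at this
  linarith

theorem hasDerivAt_tan_div_self {t : ℝ} (ht : t ≠ 0) (hcos : cos t ≠ 0) :
    HasDerivAt (fun t => tan t / t) ((t / cos t ^ 2 - tan t) / t ^ 2) t :=
  ((hasDerivAt_tan hcos).div (hasDerivAt_id' t) ht).congr_deriv (by ring)

theorem strictMonoOn_tan_div_self : StrictMonoOn (fun t => tan t / t) (Set.Ioo 0 (π / 2)) := by
  have hcos {t : ℝ} (ht : t ∈ Set.Ioo 0 (π / 2)) : 0 < cos t :=
    cos_pos_of_mem_Ioo ⟨by linarith [ht.1, pi_pos], ht.2⟩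
  apply strictMonoOn_of_deriv_pos (convex_Ioo 0 (π / 2))
  · intro t ht
    exact (hasDerivAt_tan_div_self ht.1.ne' (hcos ht).ne').continuousAt.continuousWithinAt
  · intro t ht
    rw [interior_Ioo] at ht
    have hc := hcos ht
    rw [(hasDerivAt_tan_div_self ht.1.ne' hc.ne').deriv, tan_eq_sin_div_cos]
    have : sin t / cos t < t / cos t ^ 2 := by
      rw [div_lt_div_iff₀ hc (by positivity)]
      nlinarith [sin_mul_cos_lt_self ht.1]
    exact div_pos (sub_pos.2 this) (pow_pos ht.1 2)

theorem mapsTo_pi_div_Ioi_two : Set.MapsTo (π / ·) (Set.Ioi 2) (Set.Ioo 0 (π / 2)) :=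
  fun _ hx => ⟨div_pos pi_pos (two_pos.trans hx), div_lt_div_of_pos_left pi_pos two_pos hx⟩

end Real

theorem strictAntiOn_mul_tan_pi_div :
    StrictAntiOn (fun x : ℝ => x * Real.tan (π / x)) (Set.Ioi 2) := by
  intro x hx y hy hxy
  have hx0 : x ≠ 0 := (two_pos.trans hx).ne'
  have hy0 : y ≠ 0 := (two_pos.trans hy).ne'
  have hslope := strictMonoOn_tan_div_self (mapsTo_pi_div_Ioi_two hy) (mapsTo_pi_div_Ioi_two hx)
    (div_lt_div_of_pos_left pi_pos (two_pos.trans hx) hxy)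
  have hrewrite {z : ℝ} (hz : z ≠ 0) : z * tan (π / z) = π * (tan (π / z) / (π / z)) := by
    field_simp
  simp only [hrewrite hx0, hrewrite hy0]
  exact mul_lt_mul_of_pos_left hslope pi_pos
end

section
/- Let k be a natural number and let θ : Fin k → ℝ satisfy π/4 ≤ θ(i) < π for every i and ∑ᵢ θ(i) = 2π. Then ∑ᵢ tan(θ(i)/2) ≥ 8 · tan(π/8). -/
open Real Finset

/-! The half-angles `xᵢ = θᵢ / 2` lie in `[π/8, π/2)` and sum to `8 · (π/8)`, so there are at most
eight of them. As `tan' = 1 / cos²` increases on `[0, π/2)`, `tan` lies above its tangent line at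
`π/8`, and summing these tangent lines gives `k tan(π/8) + (8 - k)(π/8) / cos²(π/8)`. This is at
least `8 tan(π/8)` because `tan a ≤ a / cos² a`, which is `sin 2a ≤ 2a`. -/

lemma Finset.mul_le_sum_of_tangent_line_le {ι : Type*} (s : Finset ι) (x : ι → ℝ) (f : ℝ → ℝ)
    {a c m : ℝ} (ha : 0 < a) (hx : ∀ i ∈ s, a ≤ x i) (hsum : ∑ i ∈ s, x i = m * a)
    (htangent : ∀ i ∈ s, f a + c * (x i - a) ≤ f (x i)) (hfa : f a ≤ a * c) :
    m * f a ≤ ∑ i ∈ s, f (x i) := by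
  have hcard : (#s : ℝ) ≤ m := by
    have : #s * a ≤ m * a := by
      simpa [hsum] using card_nsmul_le_sum s x a hx
    exact le_of_mul_le_mul_right this ha
  calc
    m * f a ≤ #s * f a + c * (m * a - #s * a) := by
      nlinarith [mul_nonneg (sub_nonneg.2 hcard) (sub_nonneg.2 hfa)]
    _ = ∑ i ∈ s, (f a + c * (x i - a)) := by
      rw [sum_add_distrib, ← mul_sum, sum_sub_distrib, hsum]; simp
    _ ≤ ∑ i ∈ s, f (x i) := sum_le_sum htangent

lemma Real.tan_add_mul_sub_le_tan {a x : ℝ} (ha : 0 ≤ a) (hax : a ≤ x) (hx : x < π / 2) :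
    tan a + 1 / cos a ^ 2 * (x - a) ≤ tan x := by
  have hcos : ∀ y ∈ Set.Ico a (π / 2), 0 < cos y := fun y hy =>
    cos_pos_of_mem_Ioo ⟨by linarith [pi_pos, hy.1], hy.2⟩
  have hderiv : ∀ y ∈ Set.Ico a (π / 2), HasDerivAt tan (1 / cos y ^ 2) y := fun y hy =>
    hasDerivAt_tan (hcos y hy).ne'
  refine le_sub_iff_add_le'.mp <| (convex_Ico a (π / 2)).mul_sub_le_image_sub_of_le_deriv
    (fun y hy => (hderiv y hy).continuousAt.continuousWithinAt)
    (fun y hy => (hderiv y (interior_subset hy)).differentiableAt.differentiableWithinAt)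
    ?_ a ⟨le_rfl, hax.trans_lt hx⟩ x ⟨hax, hx⟩ hax
  rw [interior_Ico]
  intro y hy
  have hcos_y := hcos y (Set.Ioo_subset_Ico_self hy)
  rw [(hderiv y (Set.Ioo_subset_Ico_self hy)).deriv]
  gcongr
  exact cos_le_cos_of_nonneg_of_le_pi ha (by linarith [pi_pos, hy.2]) hy.1.le

lemma Real.tan_le_mul_one_div_cos_sq {a : ℝ} (ha : 0 ≤ a) : tan a ≤ a * (1 / cos a ^ 2) := by
  have hsin : sin a * cos a ≤ a := by
    have := sin_le (by linarith : 0 ≤ 2 * a)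
    rw [sin_two_mul] at this
    linarith
  rcases eq_or_ne (cos a) 0 with h | h
  · simp [tan_eq_sin_div_cos, h]
  calc tan a = sin a * cos a / cos a ^ 2 := by rw [tan_eq_sin_div_cos]; field_simp
    _ ≤ a / cos a ^ 2 := by gcongr
    _ = a * (1 / cos a ^ 2) := by ring

theorem sum_tan_half_ge_eight_tan_pi_div_eight (k : ℕ) (θ : Fin k → ℝ)
    (hθ : ∀ i, π / 4 ≤ θ i ∧ θ i < π) (hsum : ∑ i, θ i = 2 * π) :
    ∑ i, Real.tan (θ i / 2) ≥ 8 * Real.tan (π / 8) := by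
  have hlower : ∀ i ∈ univ, π / 8 ≤ θ i / 2 := fun i _ => by linarith [(hθ i).1]
  have hhalf : ∑ i, θ i / 2 = 8 * (π / 8) := by rw [← sum_div, hsum]; ring
  exact univ.mul_le_sum_of_tangent_line_le (fun i => θ i / 2) tan (by positivity) hlower hhalf
    (fun i hi => tan_add_mul_sub_le_tan (by positivity) (hlower i hi) (by linarith [(hθ i).2]))
    (tan_le_mul_one_div_cos_sq (by positivity))
end

section
/- Let d > 0 and 0 < θ < π. Let A, B ∈ ℝ² be two points lying on the vertical line {p : p.1 = d}, suppose the angle ∠A O B at the origin O = (0,0) equals θ. Then the two-dimensional Lebesgue measure of the convex hull of {O, A, B} is at least d² · tan(θ/2), with the minimum attained by the isosceles triangle. -/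
/-!
The triangle `0AB` is the image of the unit triangle under the linear map with columns `A`, `B`,
so its area is `|det (A, B)| / 2 = ‖A‖ ‖B‖ sin θ / 2 = tan (θ / 2) (‖A‖ ‖B‖ + ⟪A, B⟫) / 2`,
using `sin θ = tan (θ / 2) (1 + cos θ)`. For `A = (d, a)` and `B = (d, b)`, the identity
`(d² + a²) (d² + b²) = (d² - ab)² + d² (a + b)²` gives `‖A‖ ‖B‖ ≥ d² - ab = 2d² - ⟪A, B⟫`,
with equality for `b = -a`, which is the isosceles case.
-/

open Real EuclideanGeometry MeasureTheory

-- Where `cos (x / 2) = 0`, both sides vanish: `tan` takes the junk value `0` there.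
theorem Real.tan_half_mul_one_add_cos (x : ℝ) : tan (x / 2) * (1 + cos x) = sin x := by
  have hx : x = 2 * (x / 2) := by ring
  rw [hx, cos_two_mul, sin_two_mul, tan_eq_sin_div_cos, ← hx]
  rcases eq_or_ne (cos (x / 2)) 0 with h | h
  · simp [h]
  · field_simp
    ring

namespace InnerProductGeometry

variable {V : Type*} [NormedAddCommGroup V] [InnerProductSpace ℝ V]

theorem tan_half_angle_nonneg (x y : V) : 0 ≤ tan (angle x y / 2) :=
  tan_nonneg_of_nonneg_of_le_pi_div_two (by linarith [angle_nonneg x y])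
    (by linarith [angle_le_pi x y])

theorem tan_half_angle_mul_norm_mul_norm_add_inner (x y : V) :
    tan (angle x y / 2) * (‖x‖ * ‖y‖ + inner ℝ x y) = sin (angle x y) * (‖x‖ * ‖y‖) := by
  rw [← cos_angle_mul_norm_mul_norm, ← tan_half_mul_one_add_cos]
  ring

end InnerProductGeometry

def unitTriangle : Set (ℝ × ℝ) := {p | 0 ≤ p.1 ∧ 0 ≤ p.2 ∧ p.1 + p.2 ≤ 1}

theorem measurableSet_unitTriangle : MeasurableSet unitTriangle := by
  unfold unitTriangle
  measurability

theorem volume_unitTriangle : volume unitTriangle = ENNReal.ofReal (1 / 2) := by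
  have hslice (x : ℝ) : volume (Prod.mk x ⁻¹' unitTriangle) =
      (Set.Icc 0 1).indicator (fun x => ENNReal.ofReal (1 - x)) x := by
    by_cases hx : x ∈ Set.Icc 0 1
    · have : Prod.mk x ⁻¹' unitTriangle = Set.Icc 0 (1 - x) := by
        ext y
        simp [unitTriangle, hx.1, le_sub_iff_add_le']
      simp [this, hx]
    · have : Prod.mk x ⁻¹' unitTriangle = ∅ :=
        Set.eq_empty_of_forall_notMem fun y ⟨h0, h1, h2⟩ => hx ⟨h0, by linarith⟩
      simp [this, hx]
  have hint : ∫ x in Set.Icc (0 : ℝ) 1, (1 - x) = 1 / 2 := by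
    rw [integral_Icc_eq_integral_Ioc, ← intervalIntegral.integral_of_le zero_le_one,
      intervalIntegral.integral_comp_sub_left (fun x => x), integral_id]
    norm_num
  rw [Measure.volume_eq_prod, Measure.prod_apply measurableSet_unitTriangle]
  simp only [hslice]
  rw [lintegral_indicator measurableSet_Icc, ← hint, ofReal_integral_eq_lintegral_ofReal]
  · exact (continuous_const.sub continuous_id).integrableOn_Icc
  · exact (ae_restrict_iff' measurableSet_Icc).2 (.of_forall fun x hx => sub_nonneg.2 hx.2)

namespace EuclideanSpace

theorem inner_fin_two (x y : EuclideanSpace ℝ (Fin 2)) :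
    inner ℝ x y = x 0 * y 0 + x 1 * y 1 := by
  simp [PiLp.inner_apply, Fin.sum_univ_two, mul_comm]

theorem norm_sq_fin_two (x : EuclideanSpace ℝ (Fin 2)) : ‖x‖ ^ 2 = x 0 ^ 2 + x 1 ^ 2 := by
  simp [real_norm_sq_eq, Fin.sum_univ_two]

theorem sin_angle_mul_norm_mul_norm_fin_two (x y : EuclideanSpace ℝ (Fin 2)) :
    sin (InnerProductGeometry.angle x y) * (‖x‖ * ‖y‖) = |x 0 * y 1 - x 1 * y 0| := by
  rw [InnerProductGeometry.sin_angle_mul_norm_mul_norm, real_inner_self_eq_norm_sq,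
    real_inner_self_eq_norm_sq, norm_sq_fin_two, norm_sq_fin_two, inner_fin_two, ← sqrt_sq_eq_abs]
  congr 1
  ring

theorem convexHull_zero_single_single :
    convexHull ℝ {0, single 0 1, single 1 1} =
      {x : EuclideanSpace ℝ (Fin 2) | 0 ≤ x 0 ∧ 0 ≤ x 1 ∧ x 0 + x 1 ≤ 1} := by
  refine subset_antisymm (convexHull_min ?_ ?_) ?_
  · simp [Set.insert_subset_iff]
  · rintro x ⟨hx0, hx1, hx⟩ y ⟨hy0, hy1, hy⟩ a b ha hb hab
    simp only [Set.mem_ofPred_eq, PiLp.add_apply, PiLp.smul_apply, smul_eq_mul]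
    refine ⟨by positivity, by positivity, by nlinarith⟩
  · rintro x ⟨hx0, hx1, hx⟩
    have hx_eq : x = ∑ i, ![1 - x 0 - x 1, x 0, x 1] i •
        ![0, single 0 1, single 1 1] i := by
      ext i; fin_cases i <;> simp [Fin.sum_univ_three]
    rw [hx_eq]
    refine (convex_convexHull ℝ _).sum_mem (fun i _ => ?_) (by simp [Fin.sum_univ_three]; ring)
      (fun i _ => subset_convexHull ℝ _ ?_)
    · fin_cases i <;> simp <;> linarith
    · fin_cases i <;> simp

theorem volume_convexHull_zero_single_single :
    volume (convexHull ℝ {0, single 0 1, single 1 1} : Set (EuclideanSpace ℝ (Fin 2))) =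
      ENNReal.ofReal (1 / 2) := by
  have hmp : MeasurePreserving (fun x : EuclideanSpace ℝ (Fin 2) => (x 0, x 1)) :=
    (volume_preserving_finTwoArrow ℝ).comp (PiLp.volume_preserving_ofLp (Fin 2))
  rw [convexHull_zero_single_single, ← volume_unitTriangle]
  exact hmp.measure_preimage measurableSet_unitTriangle.nullMeasurableSet

theorem volume_convexHull_zero_pair (A B : EuclideanSpace ℝ (Fin 2)) :
    volume (convexHull ℝ {0, A, B}) = ENNReal.ofReal (|A 0 * B 1 - A 1 * B 0| / 2) := by
  let M : Matrix (Fin 2) (Fin 2) ℝ := !![A 0, B 0; A 1, B 1]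
  have himage : Matrix.toEuclideanLin M '' {0, single 0 1, single 1 1} = {0, A, B} := by
    have h0 : Matrix.toEuclideanLin M (single 0 1) = A := by ext i; fin_cases i <;> simp [M]
    have h1 : Matrix.toEuclideanLin M (single 1 1) = B := by ext i; fin_cases i <;> simp [M]
    simp [Set.image_insert_eq, h0, h1]
  have hdet : LinearMap.det (Matrix.toEuclideanLin M) = A 0 * B 1 - A 1 * B 0 := by
    rw [Matrix.toEuclideanLin_eq_toLin_orthonormal, LinearMap.det_toLin, Matrix.det_fin_two_of]
    ring
  rw [← himage, ← LinearMap.image_convexHull, Measure.addHaar_image_linearMap,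
    volume_convexHull_zero_single_single, hdet, ← ENNReal.ofReal_mul (abs_nonneg _), mul_one_div]

theorem volume_convexHull_zero_pair_eq_tan_half_angle (A B : EuclideanSpace ℝ (Fin 2)) :
    volume (convexHull ℝ {0, A, B}) =
      ENNReal.ofReal
        (tan (InnerProductGeometry.angle A B / 2) * (‖A‖ * ‖B‖ + inner ℝ A B) / 2) := by
  rw [volume_convexHull_zero_pair, InnerProductGeometry.tan_half_angle_mul_norm_mul_norm_add_inner,
    sin_angle_mul_norm_mul_norm_fin_two]

end EuclideanSpace

section VerticalLine

variable {A B : EuclideanSpace ℝ (Fin 2)} {d : ℝ}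

theorem two_mul_sq_le_norm_mul_norm_add_inner (hA : A 0 = d) (hB : B 0 = d) :
    2 * d ^ 2 ≤ ‖A‖ * ‖B‖ + inner ℝ A B := by
  have hnorm : ‖A‖ * ‖B‖ = √((d ^ 2 + A 1 ^ 2) * (d ^ 2 + B 1 ^ 2)) := by
    rw [← sqrt_sq (by positivity : 0 ≤ ‖A‖ * ‖B‖), mul_pow,
      EuclideanSpace.norm_sq_fin_two, EuclideanSpace.norm_sq_fin_two, hA, hB]
  have hcs : d ^ 2 - A 1 * B 1 ≤ ‖A‖ * ‖B‖ :=
    hnorm ▸ (le_abs_self _).trans (abs_le_sqrt (by nlinarith [sq_nonneg (d * (A 1 + B 1))]))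
  rw [EuclideanSpace.inner_fin_two, hA, hB]
  linarith

theorem norm_mul_norm_add_inner_eq_of_norm_eq (hA : A 0 = d) (hB : B 0 = d) (hAB : A ≠ B)
    (hnorm : ‖A‖ = ‖B‖) : ‖A‖ * ‖B‖ + inner ℝ A B = 2 * d ^ 2 := by
  have hsq : A 1 ^ 2 = B 1 ^ 2 := by
    have := congrArg (· ^ 2) hnorm
    simp only [EuclideanSpace.norm_sq_fin_two, hA, hB] at this
    linarith
  have hneg : A 1 = -B 1 := by
    refine (sq_eq_sq_iff_eq_or_eq_neg.1 hsq).resolve_left fun h => hAB ?_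
    ext i
    fin_cases i
    · simp [hA, hB]
    · simpa using h
  rw [← hnorm, ← sq, EuclideanSpace.norm_sq_fin_two, EuclideanSpace.inner_fin_two, hA, hB, hneg]
  ring

end VerticalLine

theorem area_triangle_ge_isosceles_general (d θ : ℝ)
    (A B : EuclideanSpace ℝ (Fin 2)) (hA : A 0 = d) (hB : B 0 = d)
    (hangle : EuclideanGeometry.angle A (0 : EuclideanSpace ℝ (Fin 2)) B = θ) :
    volume (convexHull ℝ ({0, A, B} : Set (EuclideanSpace ℝ (Fin 2)))) ≥
      ENNReal.ofReal (d ^ 2 * Real.tan (θ / 2)) ∧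
    (dist (0 : EuclideanSpace ℝ (Fin 2)) A = dist (0 : EuclideanSpace ℝ (Fin 2)) B →
      volume (convexHull ℝ ({0, A, B} : Set (EuclideanSpace ℝ (Fin 2)))) =
        ENNReal.ofReal (d ^ 2 * Real.tan (θ / 2))) := by
  obtain rfl : InnerProductGeometry.angle A B = θ := by
    simpa [EuclideanGeometry.angle] using hangle
  rw [EuclideanSpace.volume_convexHull_zero_pair_eq_tan_half_angle]
  have htan := InnerProductGeometry.tan_half_angle_nonneg A B
  refine ⟨ENNReal.ofReal_le_ofReal ?_, fun hnorm => ?_⟩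
  · nlinarith [two_mul_sq_le_norm_mul_norm_add_inner hA hB]
  rw [dist_zero_left, dist_zero_left] at hnorm
  -- `A = B` is the degenerate triangle, where `θ = 0` unless `A = B = 0`.
  rcases eq_or_ne A B with rfl | hAB
  · rcases eq_or_ne A 0 with rfl | hA0
    · obtain rfl : d = 0 := by simpa using hA.symm
      simp
    · simp [InnerProductGeometry.angle_self hA0]
  · rw [norm_mul_norm_add_inner_eq_of_norm_eq hA hB hAB hnorm]
    ring_nf

theorem area_triangle_ge_isosceles (d θ : ℝ) (hd : 0 < d) (hθ : 0 < θ ∧ θ < π)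
    (A B : EuclideanSpace ℝ (Fin 2)) (hA : A 0 = d) (hB : B 0 = d)
    (hangle : EuclideanGeometry.angle A (0 : EuclideanSpace ℝ (Fin 2)) B = θ) :
    volume (convexHull ℝ ({0, A, B} : Set (EuclideanSpace ℝ (Fin 2)))) ≥
      ENNReal.ofReal (d ^ 2 * Real.tan (θ / 2)) ∧
    (dist (0 : EuclideanSpace ℝ (Fin 2)) A = dist (0 : EuclideanSpace ℝ (Fin 2)) B →
      volume (convexHull ℝ ({0, A, B} : Set (EuclideanSpace ℝ (Fin 2)))) =
        ENNReal.ofReal (d ^ 2 * Real.tan (θ / 2))) :=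
  area_triangle_ge_isosceles_general d θ A B hA hB hangle
end
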